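/- Let p be an odd prime and N a natural number. If A is an N×N integer matrix such that A^p is the identity matrix and every entry of A − I is even (i.e., A is congruent to the identity matrix modulo 2), then A = I. -/

import Mathlib

/-!
Put `B = A - 1` and `S = 1 + A + ⋯ + A ^ (p - 1)`, so that `S * B = A ^ p - 1 = 0`.
Modulo 2 the matrix `S` reduces to `p • 1 = 1`, so `det S` is odd, in particular nonzero;
multiplying `S * B = 0` by the adjugate of `S` gives `det S • B = 0`, hence `B = 0`.
-/

open Finset

namespace Matrix

variable {R : Type*} [CommRing R] {m n : Type*} [Fintype n] [DecidableEq n]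

theorem eq_zero_of_mul_eq_zero_of_det_ne_zero [NoZeroDivisors R] {S : Matrix n n R}
    {B : Matrix n m R} (hS : S.det ≠ 0) (h : S * B = 0) : B = 0 := by
  have hdetB : S.det • B = 0 := by
    rw [← Matrix.one_mul B, ← smul_mul, ← adjugate_mul, Matrix.mul_assoc, h, Matrix.mul_zero]
  ext i j
  exact (mul_eq_zero.mp (congrFun₂ hdetB i j)).resolve_left hS

theorem eq_one_of_pow_eq_one_of_map_eq_one [NoZeroDivisors R] {K : Type*} [CommRing K]
    [Nontrivial K] (f : R →+* K) {A : Matrix n n R} {k : ℕ} (hk : IsUnit (k : K))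
    (hA : A ^ k = 1) (hf : f.mapMatrix A = 1) : A = 1 := by
  set S := ∑ i ∈ range k, A ^ i
  have hSB : S * (A - 1) = 0 := by rw [geom_sum_mul, hA, sub_self]
  have hfS : f.mapMatrix S = (k : Matrix n n K) := by simp [S, map_sum, map_pow, hf]
  have hdetS : f S.det = (k : K) ^ Fintype.card n := by
    rw [f.map_det, hfS, ← diagonal_natCast, det_diagonal, prod_const, card_univ]
  have hS : S.det ≠ 0 := fun h => (hk.pow _).ne_zero (by rw [← hdetS, h, map_zero])
  exact sub_eq_zero.mp (eq_zero_of_mul_eq_zero_of_det_ne_zero hS hSB)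

end Matrix

theorem matrix_eq_one_of_pow_odd_prime_eq_one_of_mod_two_trivial_general
    (p : ℕ) (hodd : Odd p) (N : ℕ)
    (A : Matrix (Fin N) (Fin N) ℤ) (hA : A ^ p = 1)
    (hmod : ∀ i j, 2 ∣ (A - 1) i j) : A = 1 := by
  refine Matrix.eq_one_of_pow_eq_one_of_map_eq_one (Int.castRingHom (ZMod 2))
    (by simp [hodd.natCast_zmod_two]) hA ?_
  rw [← map_one (Int.castRingHom (ZMod 2)).mapMatrix]
  ext i j
  exact ((ZMod.intCast_eq_intCast_iff_dvd_sub _ _ 2).mpr (hmod i j)).symm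

/-- The algebraic core of Lemma 4.1: an integer matrix of odd prime order `p`
which is congruent to the identity modulo 2 must be the identity. -/
theorem matrix_eq_one_of_pow_odd_prime_eq_one_of_mod_two_trivial
    (p : ℕ) (hp : p.Prime) (hodd : Odd p) (N : ℕ)
    (A : Matrix (Fin N) (Fin N) ℤ) (hA : A ^ p = 1)
    (hmod : ∀ i j, 2 ∣ (A - 1) i j) : A = 1 :=
  matrix_eq_one_of_pow_odd_prime_eq_one_of_mod_two_trivial_general p hodd N A hA hmod
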